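/- On the Weierstrass elliptic curve E over ℚ(t) given by Y² = X³ − 4(t⁸ − 1)X (i.e., a₁ = a₂ = a₃ = a₆ = 0 and a₄ = −4(t⁸ − 1)), the affine rational point with coordinates X = 2(t⁴ + 1), Y = 4(t⁴ + 1) lies on E and has infinite order in the group of ℚ(t)-points: n • P ≠ 0 for every positive integer n. (This is the content of the paper's Lemma 3.1: the point Q_t = [1 : t⁴ : 1] on Y² = X⁴ + (t⁸−1)Z⁴ is non-torsion with respect to the origin P = [1 : 1 : 0], transported to the Weierstrass model.) -/

import Mathlib

open WeierstrassCurve Polynomial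

/-- The Weierstrass elliptic curve `Y² = X³ − 4(t⁸ − 1)X` over `ℚ(t)`. -/
noncomputable def E2 : WeierstrassCurve.Affine (RatFunc ℚ) :=
  { a₁ := 0, a₂ := 0, a₃ := 0,
    a₄ := -4 * ((RatFunc.X : RatFunc ℚ) ^ 8 - 1), a₆ := 0 }

namespace E2Aux

open WeierstrassCurve.Affine WeierstrassCurve.Affine.Point Classical

noncomputable def xP : RatFunc ℚ := 2 * ((RatFunc.X : RatFunc ℚ) ^ 4 + 1)
noncomputable def yP : RatFunc ℚ := 4 * ((RatFunc.X : RatFunc ℚ) ^ 4 + 1)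
noncomputable def cc : RatFunc ℚ := -4 * ((RatFunc.X : RatFunc ℚ) ^ 8 - 1)

lemma a1 : E2.a₁ = 0 := rfl
lemma a2 : E2.a₂ = 0 := rfl
lemma a3 : E2.a₃ = 0 := rfl
lemma a4 : E2.a₄ = cc := rfl
lemma a6 : E2.a₆ = 0 := rfl

lemma algInj : Function.Injective (algebraMap ℚ[X] (RatFunc ℚ)) :=
  IsFractionRing.injective _ _

instance : CharZero (RatFunc ℚ) := charZero_of_injective_algebraMap algInj

lemma alg_ne_zero {p : ℚ[X]} (h : p ≠ 0) : algebraMap ℚ[X] (RatFunc ℚ) p ≠ 0 := by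
  intro hh
  exact h (algInj (by simpa using hh))

lemma xP_eq : xP = algebraMap ℚ[X] (RatFunc ℚ) (2 * (X ^ 4 + 1)) := by
  simp only [map_mul, map_add, map_pow, map_one, map_ofNat, RatFunc.algebraMap_X, xP]

lemma cc_eq : cc = algebraMap ℚ[X] (RatFunc ℚ) (-4 * (X ^ 8 - 1)) := by
  simp only [map_mul, map_add, map_sub, map_pow, map_one, map_ofNat, map_neg,
    RatFunc.algebraMap_X, cc]

lemma xP_ne : xP ≠ 0 := by
  rw [xP_eq]
  apply alg_ne_zero
  intro h
  have := congrArg (Polynomial.eval 0) h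
  simp at this

lemma yP_ne : yP ≠ 0 := by
  have : yP = 2 * xP := by rw [yP, xP]; ring
  rw [this]
  exact mul_ne_zero two_ne_zero xP_ne

lemma cc_ne : cc ≠ 0 := by
  rw [cc_eq]
  apply alg_ne_zero
  intro h
  have := congrArg (Polynomial.eval 0) h
  simp at this

lemma hP : E2.Nonsingular xP yP := by
  rw [nonsingular_iff]
  constructor
  · rw [equation_iff, a1, a2, a3, a4, a6, xP, yP, cc]
    ring
  · right
    rw [a1, a3]
    intro h
    apply yP_ne
    have h2 : (2 : RatFunc ℚ) * yP = 0 := by linear_combination h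
    rcases mul_eq_zero.mp h2 with h | h
    · exact absurd h two_ne_zero
    · exact h


lemma sq_ne_two_rat {a b : ℚ} (hb : b ≠ 0) : a ^ 2 ≠ 2 * b ^ 2 := by
  intro h
  have h2 : ((a / b : ℚ) : ℝ) ^ 2 = 2 := by
    push_cast
    field_simp
    exact_mod_cast h.trans (mul_comm _ _)
  apply irrational_sqrt_two
  refine ⟨|a / b|, ?_⟩
  have : Real.sqrt 2 = |((a / b : ℚ) : ℝ)| := by
    rw [← h2, Real.sqrt_sq_eq_abs]
  rw [this, Rat.cast_abs]

-- leading coefficient computation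
lemma lc_aux : (2 * (X ^ 4 + 1) : ℚ[X]).leadingCoeff = 2 := by
  have hm : (X ^ 4 + 1 : ℚ[X]).Monic := by
    apply Polynomial.monic_X_pow_add
    simp [Polynomial.degree_one]
  rw [Polynomial.leadingCoeff_mul, hm.leadingCoeff]
  simp [Polynomial.leadingCoeff]

lemma ns_polyA (p q : ℚ[X]) (hq : q ≠ 0) : p ^ 2 ≠ 2 * (X ^ 4 + 1) * q ^ 2 := by
  intro h
  have e := congrArg Polynomial.leadingCoeff h
  rw [Polynomial.leadingCoeff_pow, Polynomial.leadingCoeff_mul, Polynomial.leadingCoeff_pow,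
    lc_aux] at e
  exact sq_ne_two_rat (Polynomial.leadingCoeff_ne_zero.mpr hq) e

lemma ns_poly1 (H : ℚ[X]) (hH : H.eval 1 ≠ 0) (p q : ℚ[X]) (hq : q ≠ 0) :
    p ^ 2 ≠ (X - 1) * H * q ^ 2 := by
  intro h
  have hX1 : (X - 1 : ℚ[X]) ≠ 0 := by
    have := Polynomial.X_sub_C_ne_zero (R := ℚ) 1
    simpa using this
  have hH0 : H ≠ 0 := fun h0 => hH (by simp [h0])
  have hp : p ≠ 0 := by
    intro h0
    rw [h0] at h
    exact (mul_ne_zero (mul_ne_zero hX1 hH0) (pow_ne_zero 2 hq)) (by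
      simpa using h.symm)
  have e := congrArg (rootMultiplicity 1) h
  rw [show p ^ 2 = p * p by ring, Polynomial.rootMultiplicity_mul (by
      exact mul_ne_zero hp hp),
    Polynomial.rootMultiplicity_mul (mul_ne_zero (mul_ne_zero hX1 hH0) (pow_ne_zero 2 hq)),
    Polynomial.rootMultiplicity_mul (mul_ne_zero hX1 hH0),
    show q ^ 2 = q * q by ring, Polynomial.rootMultiplicity_mul (mul_ne_zero hq hq),
    show (X - 1 : ℚ[X]) = X - C 1 by simp,
    Polynomial.rootMultiplicity_X_sub_C_self,
    Polynomial.rootMultiplicity_eq_zero (p := H) (x := 1) (by simpa [Polynomial.IsRoot] using hH)] at e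
  omega

lemma not_square_K {g : ℚ[X]} (hg : ∀ p q : ℚ[X], q ≠ 0 → p ^ 2 ≠ g * q ^ 2) (f : RatFunc ℚ) :
    f ^ 2 ≠ algebraMap ℚ[X] (RatFunc ℚ) g := by
  intro h
  have hd : f.denom ≠ 0 := f.denom_ne_zero
  have hdK : algebraMap ℚ[X] (RatFunc ℚ) f.denom ≠ 0 := alg_ne_zero hd
  have hf : algebraMap ℚ[X] (RatFunc ℚ) f.num / algebraMap ℚ[X] (RatFunc ℚ) f.denom = f :=
    RatFunc.num_div_denom f
  rw [← hf, div_pow, div_eq_iff (pow_ne_zero 2 hdK)] at h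
  have : algebraMap ℚ[X] (RatFunc ℚ) (f.num ^ 2) =
      algebraMap ℚ[X] (RatFunc ℚ) (g * f.denom ^ 2) := by
    rw [map_mul, map_pow, map_pow, h]
  exact hg _ _ hd (algInj this)

lemma NSA (f : RatFunc ℚ) : f ^ 2 ≠ xP := by
  rw [xP_eq]
  exact not_square_K (fun p q hq => by simpa using ns_polyA p q hq) f

lemma NSC (f : RatFunc ℚ) : f ^ 2 ≠ cc := by
  rw [cc_eq]
  refine not_square_K (fun p q hq => ?_) f
  have := ns_poly1 (-4 * (X ^ 7 + X ^ 6 + X ^ 5 + X ^ 4 + X ^ 3 + X ^ 2 + X + 1)) (by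
    simp; norm_num) p q hq
  convert this using 2
  ring

lemma NSB (f : RatFunc ℚ) : f ^ 2 ≠ cc * xP := by
  rw [cc_eq, xP_eq, ← map_mul]
  refine not_square_K (fun p q hq => ?_) f
  have := ns_poly1 (-8 * (X ^ 4 + 1) * (X ^ 7 + X ^ 6 + X ^ 5 + X ^ 4 + X ^ 3 + X ^ 2 + X + 1))
    (by simp; norm_num) p q hq
  convert this using 2
  ring

lemma NSD (f : RatFunc ℚ) : f ^ 2 ≠ (RatFunc.X : RatFunc ℚ) ^ 8 - 1 := by
  have : ((RatFunc.X : RatFunc ℚ) ^ 8 - 1) = algebraMap ℚ[X] (RatFunc ℚ) (X ^ 8 - 1) := by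
    simp only [map_sub, map_pow, map_one, RatFunc.algebraMap_X]
  rw [this]
  refine not_square_K (fun p q hq => ?_) f
  have := ns_poly1 (X ^ 7 + X ^ 6 + X ^ 5 + X ^ 4 + X ^ 3 + X ^ 2 + X + 1)
    (by simp; norm_num) p q hq
  convert this using 2
  ring


lemma vieta {x₁ y₁ x₂ y₂ : RatFunc ℚ} (h₁ : E2.Equation x₁ y₁) (h₂ : E2.Equation x₂ y₂)
    (hxy : x₁ = x₂ → y₁ ≠ E2.negY x₂ y₂) :
    (y₁ - E2.slope x₁ x₂ y₁ y₂ * x₁) ^ 2 =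
        x₁ * x₂ * E2.addX x₁ x₂ (E2.slope x₁ x₂ y₁ y₂) ∧
      2 * x₁ * E2.slope x₁ x₂ y₁ y₂ ^ 2 - 2 * y₁ * E2.slope x₁ x₂ y₁ y₂ + cc =
        x₁ * x₂ + x₁ * E2.addX x₁ x₂ (E2.slope x₁ x₂ y₁ y₂) +
          x₂ * E2.addX x₁ x₂ (E2.slope x₁ x₂ y₁ y₂) := by
  have h := WeierstrassCurve.Affine.addPolynomial_slope h₁ h₂ (fun h => hxy h.1 h.2)
  rw [WeierstrassCurve.Affine.addPolynomial_eq, neg_inj, Cubic.prod_X_sub_C_eq,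
    Cubic.toPoly_injective, Cubic.mk.injEq] at h
  obtain ⟨-, -, h2, h3⟩ := h
  simp only [a1, a3, a4, a6] at h2 h3
  constructor
  · linear_combination -h3
  · linear_combination h2


noncomputable def Pt : E2.Point := WeierstrassCurve.Affine.Point.some _ _ hP

open Classical in
noncomputable def XX : E2.Point → RatFunc ℚ
  | .zero => 1
  | @WeierstrassCurve.Affine.Point.some _ _ _ x _ _ => if x = 0 then cc else x

lemma XX_zero : XX WeierstrassCurve.Affine.Point.zero = 1 := rfl

lemma XX_zero' : XX (0 : E2.Point) = 1 := rfl

open Classical in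
lemma XX_some {x y : RatFunc ℚ} (h : E2.Nonsingular x y) :
    XX (WeierstrassCurve.Affine.Point.some _ _ h) = if x = 0 then cc else x := rfl

lemma key (k : ℕ) : ∃ u : RatFunc ℚ, u ≠ 0 ∧ XX (k • Pt) = xP ^ k * u ^ 2 := by
  induction k with
  | zero => exact ⟨1, one_ne_zero, by rw [zero_nsmul]; show XX WeierstrassCurve.Affine.Point.zero = _; rw [XX_zero]; ring⟩
  | succ k ih =>
    obtain ⟨u, hu, hXX⟩ := ih
    rw [succ_nsmul]
    rcases hQ : (k • Pt) with _ | @⟨x₁, y₁, h₁⟩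
    · rw [hQ, XX_zero] at hXX
      rw [← WeierstrassCurve.Affine.Point.zero_def, zero_add]
      refine ⟨u, hu, ?_⟩
      show XX (WeierstrassCurve.Affine.Point.some _ _ hP) = _
      rw [XX_some, if_neg xP_ne, pow_succ]
      linear_combination xP * hXX
    · rw [hQ, XX_some] at hXX
      rw [show Pt = WeierstrassCurve.Affine.Point.some _ _ hP from rfl]
      by_cases hv : x₁ = xP ∧ y₁ = E2.negY xP yP
      · rw [WeierstrassCurve.Affine.Point.add_of_Y_eq hv.1 hv.2, XX_zero']
        refine ⟨u / xP, div_ne_zero hu xP_ne, ?_⟩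
        rw [if_neg (by rw [hv.1]; exact xP_ne), hv.1] at hXX
        rw [pow_succ]
        field_simp [xP_ne]
        linear_combination hXX
      · have hxy : x₁ = xP → y₁ ≠ E2.negY xP yP := fun hx hy => hv ⟨hx, hy⟩
        rw [WeierstrassCurve.Affine.Point.add_some (fun h => hxy h.1 h.2), XX_some]
        obtain ⟨I0, I1⟩ := vieta h₁.1 hP.1 hxy
        set L := E2.slope x₁ xP y₁ yP with hL
        set x₃ := E2.addX x₁ xP L with hx3
        by_cases h10 : x₁ = 0
        · rw [if_pos h10] at hXX
          have hy1 : y₁ = 0 := by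
            have he := h₁.1
            rw [WeierstrassCurve.Affine.equation_iff] at he
            simp only [a1, a2, a3, a4, a6, h10] at he
            have : y₁ ^ 2 = 0 := by linear_combination he
            exact pow_eq_zero_iff two_ne_zero |>.mp this
          rw [h10, hy1] at I1
          have hx3v : xP * x₃ = cc := by linear_combination -I1
          have hx3ne : x₃ ≠ 0 := fun h0 => cc_ne (by rw [← hx3v, h0, mul_zero])
          refine ⟨u / xP, div_ne_zero hu xP_ne, ?_⟩
          rw [if_neg hx3ne, pow_succ]
          field_simp [xP_ne]
          linear_combination hx3v + hXX
        · rw [if_neg h10] at hXX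
          by_cases h30 : x₃ = 0
          · have hν : y₁ - L * x₁ = 0 := by
              have : (y₁ - L * x₁) ^ 2 = 0 := by rw [I0, h30, mul_zero]
              exact pow_eq_zero_iff two_ne_zero |>.mp this
            refine ⟨u, hu, ?_⟩
            rw [if_pos h30, pow_succ]
            linear_combination I1 + 2 * L * hν + (x₁ + xP) * h30 + xP * hXX
          · have hν : y₁ - L * x₁ ≠ 0 := by
              intro h0
              apply h30
              have hz : x₁ * xP * x₃ = 0 := by rw [← I0, h0]; ring
              rcases mul_eq_zero.mp hz with hz' | hz'
              · exact absurd hz' (mul_ne_zero h10 xP_ne)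
              · exact hz'
            refine ⟨(y₁ - L * x₁) / (xP ^ (k + 1) * u),
              div_ne_zero hν (mul_ne_zero (pow_ne_zero _ xP_ne) hu), ?_⟩
            rw [if_neg h30]
            field_simp [xP_ne, hu]
            linear_combination (-1) * I0 + (-xP * x₃) * hXX


lemma torsion_free : ∀ n : ℕ, 0 < n → n • Pt ≠ 0 := by
  intro n hn h0
  have hfin : IsOfFinAddOrder Pt := isOfFinAddOrder_iff_nsmul_eq_zero.mpr ⟨n, hn, h0⟩
  set d := addOrderOf Pt with hd
  have hd0 : 0 < d := hfin.addOrderOf_pos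
  have hdP : d • Pt = 0 := addOrderOf_nsmul_eq_zero Pt
  rcases Nat.even_or_odd d with hev | hodd
  · obtain ⟨m, hm⟩ := hev
    have hm0 : 0 < m := by omega
    have hQne : m • Pt ≠ 0 := by
      intro h
      have := addOrderOf_le_of_nsmul_eq_zero hm0 h
      omega
    have h2Q : m • Pt + m • Pt = 0 := by rw [← add_nsmul, ← hm, hdP]
    rcases hQ : m • Pt with _ | @⟨x, y, hxy⟩
    · exact hQne hQ
    · rw [hQ] at h2Q
      have hy : y = E2.negY x y := by
        by_contra hne
        have := WeierstrassCurve.Affine.Point.add_of_Y_ne (h₁ := hxy) (h₂ := hxy) hne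
        rw [this] at h2Q
        exact WeierstrassCurve.Affine.Point.some_ne_zero _ h2Q
      have hy0 : y = 0 := by
        rw [WeierstrassCurve.Affine.negY, a1, a3] at hy
        have h2y : (2 : RatFunc ℚ) * y = 0 := by linear_combination hy
        rcases mul_eq_zero.mp h2y with h | h
        · exact absurd h two_ne_zero
        · exact h
      have heq : x ^ 3 + cc * x = 0 := by
        have he := hxy.1
        rw [WeierstrassCurve.Affine.equation_iff] at he
        simp only [a1, a2, a3, a4, a6, hy0] at he
        linear_combination -he
      have hx0 : x = 0 := by
        by_contra hxne
        have hfac : x * (x ^ 2 + cc) = 0 := by linear_combination heq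
        have hx2 : x ^ 2 + cc = 0 := (mul_eq_zero.mp hfac).resolve_left hxne
        apply NSD (x / 2)
        rw [div_pow]
        rw [cc] at hx2
        field_simp
        linear_combination hx2
      obtain ⟨u, hu, hXXm⟩ := key m
      rw [hQ, XX_some, if_pos hx0] at hXXm
      rcases Nat.even_or_odd m with hme | hmo
      · obtain ⟨j, hj⟩ := hme
        rw [hj] at hXXm
        exact NSC (xP ^ j * u) (by linear_combination -hXXm)
      · obtain ⟨j, hj⟩ := hmo
        rw [hj] at hXXm
        exact NSB (xP ^ (j + 1) * u) (by linear_combination (-xP) * hXXm)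
  · obtain ⟨j, hj⟩ := hodd
    obtain ⟨u, hu, hXXd⟩ := key d
    rw [hdP, XX_zero', hj] at hXXd
    exact NSA (xP ^ (j + 1) * u) (by linear_combination (-xP) * hXXd)

end E2Aux

open Classical in
/-- The point `(2(t⁴ + 1), 4(t⁴ + 1))` lies on the curve `Y² = X³ − 4(t⁸ − 1)X`
over `ℚ(t)` (it is a nonsingular point of it) and has infinite order in the
group of `ℚ(t)`-points. -/
theorem stmt_2 :
    ∃ h : E2.Nonsingular (2 * ((RatFunc.X : RatFunc ℚ) ^ 4 + 1))
      (4 * ((RatFunc.X : RatFunc ℚ) ^ 4 + 1)),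
      ∀ n : ℕ, 0 < n → n • (WeierstrassCurve.Affine.Point.some _ _ h) ≠ 0 := by
  exact ⟨E2Aux.hP, E2Aux.torsion_free⟩
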